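/- arXiv:1904.12726 — 3 statements merged into one kernel-verified Lean document; each statement's English description precedes it below -/
import Mathlib

section
/- Let X be a locally compact space with countable base, V ⊆ X open, and let H : V → Measure X be a kernel such that H(x)(X) ≤ 1 for all x ∈ V and such that for every bounded Borel function f on X the map x ↦ ∫ f dH(x) is continuous on V. Fix a dense sequence (x_m) in V and set σ := Σ_m 2^{-m} H(x_m). Then for every x ∈ V, the measure H(x) is absolutely continuous with respect to σ. -/
/-!
If `σ A = 0` then every `H (xm m)` annihilates `A`. Testing the strong Feller property on
`f = 1_A` makes `z ↦ (H z A).toReal` continuous on `V`; it vanishes on the dense set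
`{xm m}`, hence at every `x ∈ V`, and `H x A` is finite since `H x` is sub-probability.
-/

open MeasureTheory ENNReal

lemma Measure.absolutelyContinuous_sum_smul {α ι : Type*} [MeasurableSpace α]
    {μ : ι → Measure α} {c : ι → ℝ≥0∞} {i : ι} (hc : c i ≠ 0) :
    μ i ≪ Measure.sum fun j => c j • μ j :=
  (Measure.absolutelyContinuous_smul hc).trans
    (Measure.absolutelyContinuous_of_le (Measure.le_sum _ i))

lemma ContinuousAt.eq_const_of_mem_closure {X Y : Type*} [TopologicalSpace X]
    [TopologicalSpace Y] [T1Space Y] {f : X → Y} {s : Set X} {x : X} {c : Y}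
    (hf : ContinuousAt f x) (hx : x ∈ closure s) (hs : ∀ z ∈ s, f z = c) : f x = c := by
  simpa using hf.continuousWithinAt.mem_closure hx (t := {c}) hs

lemma measure_eq_zero_of_continuousAt_measureReal {X Y : Type*} [TopologicalSpace X]
    [MeasurableSpace Y] {H : X → Measure Y} {A : Set Y} {s : Set X} {x : X}
    (hcont : ContinuousAt (fun z => (H z).real A) x) (hx : x ∈ closure s)
    (hs : ∀ z ∈ s, H z A = 0) (hfin : H x A ≠ ∞) : H x A = 0 :=
  (measureReal_eq_zero_iff hfin).1 <|
    hcont.eq_const_of_mem_closure hx fun z hz => by simp [Measure.real, hs z hz]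

theorem absolutely_continuous_of_strong_feller_general
    {X : Type*} [TopologicalSpace X] [MeasurableSpace X]
    (V : Set X) (hV : IsOpen V)
    (H : X → Measure X)
    (hH_sub : ∀ x ∈ V, H x Set.univ ≤ 1)
    (hH_cont : ∀ f : X → ℝ, Measurable f → (∃ C, ∀ x, |f x| ≤ C) →
      ContinuousOn (fun x => ∫ y, f y ∂(H x)) V)
    (xm : ℕ → X) (hdense : V ⊆ closure (Set.range xm))
    (σ : Measure X) (hσ : σ = Measure.sum (fun m => ((1/2 : ℝ≥0∞) ^ (m + 1)) • H (xm m))) :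
    ∀ x ∈ V, H x ≪ σ := by
  intro x hx
  refine Measure.AbsolutelyContinuous.mk fun A hA hσA => ?_
  subst hσ
  have hnull : ∀ z ∈ Set.range xm, H z A = 0 := by
    rintro _ ⟨m, rfl⟩
    exact Measure.absolutelyContinuous_sum_smul (μ := fun m => H (xm m))
      (c := fun m => (1/2 : ℝ≥0∞) ^ (m + 1)) (by simp) hσA
  have hcont : ContinuousAt (fun z => (H z).real A) x := by
    have hbdd : ∀ y, |A.indicator (1 : X → ℝ) y| ≤ 1 := fun y => by
      by_cases hy : y ∈ A <;> simp [hy]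
    simpa only [integral_indicator_one hA] using
      (hH_cont (A.indicator 1) (measurable_one.indicator hA) ⟨1, hbdd⟩).continuousAt
        (hV.mem_nhds hx)
  have hfin : H x A ≠ ∞ :=
    ((measure_mono (Set.subset_univ A)).trans_lt ((hH_sub x hx).trans_lt one_lt_top)).ne
  exact measure_eq_zero_of_continuousAt_measureReal hcont (hdense hx) hnull hfin

theorem absolutely_continuous_of_strong_feller
    {X : Type*} [TopologicalSpace X] [LocallyCompactSpace X]
    [SecondCountableTopology X] [MeasurableSpace X] [BorelSpace X]
    (V : Set X) (hV : IsOpen V)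
    (H : X → Measure X)
    (hH_sub : ∀ x ∈ V, H x Set.univ ≤ 1)
    (hH_cont : ∀ f : X → ℝ, Measurable f → (∃ C, ∀ x, |f x| ≤ C) →
      ContinuousOn (fun x => ∫ y, f y ∂(H x)) V)
    (xm : ℕ → X) (hxm : ∀ m, xm m ∈ V) (hdense : V ⊆ closure (Set.range xm))
    (σ : Measure X) (hσ : σ = Measure.sum (fun m => ((1/2 : ℝ≥0∞) ^ (m + 1)) • H (xm m))) :
    ∀ x ∈ V, H x ≪ σ :=
  absolutely_continuous_of_strong_feller_general V hV H hH_sub hH_cont xm hdense σ hσ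
end

section
/- Let X be a locally compact space with countable base, V ⊆ X an open set, and H : V → Measure X a kernel with H(x)(X) ≤ 1 for all x ∈ V such that x ↦ ∫ f dH(x) is continuous on V for every bounded Borel f. If (f_n) is a sequence of Borel functions on X with 0 ≤ f_n ≤ 1, then there exist a subsequence (f_{n_k}) and a Borel function f with 0 ≤ f ≤ 1 such that ∫ f_{n_k} dH(x) → ∫ f dH(x) for every x ∈ V. -/
open MeasureTheory Filter Topology ENNReal

/-!
Fix a countable dense set `S ⊆ V` and a finite measure `σ` dominating every `H s`, `s ∈ S`.
Since `x ↦ H x A` is continuous on `V`, a `σ`-null set is `H z`-null for every `z ∈ V`, so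
`H z ≪ σ`. The `f n` are bounded in the separable Hilbert space `L²(σ)`, hence a subsequence
converges weakly, to a limit that may be taken Borel with values in `[0, 1]`. Weak convergence
against bounded densities extends, by truncating `dH z / dσ`, to convergence of `∫ f dH z`.
-/

theorem exists_strictMono_tendsto_inner {𝕜 E : Type*} [RCLike 𝕜] [NormedAddCommGroup E]
    [InnerProductSpace 𝕜 E] [CompleteSpace E] [TopologicalSpace.SeparableSpace E]
    (u : ℕ → E) {C : ℝ} (hu : ∀ n, ‖u n‖ ≤ C) :
    ∃ φ : ℕ → ℕ, StrictMono φ ∧ ∃ g : E,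
      ∀ h, Tendsto (fun k => inner 𝕜 (u (φ k)) h) atTop (𝓝 (inner 𝕜 g h)) := by
  let v : ℕ → WeakDual 𝕜 E := fun n => StrongDual.toWeakDual (InnerProductSpace.toDual 𝕜 E (u n))
  have hv : ∀ n, v n ∈ WeakDual.toStrongDual ⁻¹' Metric.closedBall 0 C := fun n => by
    simpa [v] using hu n
  obtain ⟨ℓ, -, φ, hφ, hlim⟩ := WeakDual.isSeqCompact_closedBall 𝕜 E 0 C hv
  refine ⟨φ, hφ, (InnerProductSpace.toDual 𝕜 E).symm (WeakDual.toStrongDual ℓ), fun h => ?_⟩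
  simpa [v, Function.comp_def] using ((WeakDual.eval_continuous h).tendsto ℓ).comp hlim

section Integrals

variable {X : Type*} [MeasurableSpace X] {σ : Measure X}

theorem integral_mul_eq_inner_toLp {f ρ : X → ℝ} (hf : MemLp f 2 σ) (hρ : MemLp ρ 2 σ) :
    ∫ x, f x * ρ x ∂σ = inner ℝ (hf.toLp f) (hρ.toLp ρ) := by
  rw [L2.inner_def]
  refine integral_congr_ae ?_
  filter_upwards [hf.coeFn_toLp, hρ.coeFn_toLp] with x hfx hρx
  simp [hfx, hρx, mul_comm]

theorem exists_strictMono_tendsto_integral_mul [IsSeparable σ] (f : ℕ → X → ℝ)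
    (hf : ∀ n, MemLp (f n) 2 σ) {C : ℝ≥0∞} (hC : C ≠ ∞) (hbd : ∀ n, eLpNorm (f n) 2 σ ≤ C) :
    ∃ φ : ℕ → ℕ, StrictMono φ ∧ ∃ g : Lp ℝ 2 σ, ∀ ρ, MemLp ρ 2 σ →
      Tendsto (fun k => ∫ x, f (φ k) x * ρ x ∂σ) atTop (𝓝 (∫ x, g x * ρ x ∂σ)) := by
  have : Fact ((2 : ℝ≥0∞) ≠ ∞) := ⟨ofNat_ne_top⟩
  obtain ⟨φ, hφ, g, hg⟩ := exists_strictMono_tendsto_inner (𝕜 := ℝ)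
    (fun n => (hf n).toLp (f n)) fun n => by
      rw [Lp.norm_toLp]; exact ENNReal.toReal_mono hC (hbd n)
  refine ⟨φ, hφ, g, fun ρ hρ => ?_⟩
  rw [integral_mul_eq_inner_toLp (Lp.memLp g) hρ, Lp.toLp_coeFn]
  simpa only [integral_mul_eq_inner_toLp (hf _) hρ] using hg (hρ.toLp ρ)

theorem ae_nonneg_and_le_one_of_tendsto_setIntegral [IsFiniteMeasure σ] {f : ℕ → X → ℝ}
    {g : X → ℝ} (hf : ∀ n x, 0 ≤ f n x ∧ f n x ≤ 1) (hg : Integrable g σ)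
    (h : ∀ s, MeasurableSet s →
      Tendsto (fun k => ∫ x in s, f k x ∂σ) atTop (𝓝 (∫ x in s, g x ∂σ))) :
    ∀ᵐ x ∂σ, 0 ≤ g x ∧ g x ≤ 1 := by
  have hg_nonneg : 0 ≤ᵐ[σ] g := ae_nonneg_of_forall_setIntegral_nonneg hg fun s hs _ =>
    ge_of_tendsto' (h s hs) fun k => setIntegral_nonneg hs fun x _ => (hf k x).1
  have hg_le_one : g ≤ᵐ[σ] fun _ => 1 :=
    ae_le_of_forall_setIntegral_le hg (integrable_const 1) fun s hs _ =>
      le_of_tendsto' (h s hs) fun k => integral_mono_of_nonneg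
        (ae_of_all _ fun x => (hf k x).1) (integrable_const 1) (ae_of_all _ fun x => (hf k x).2)
  filter_upwards [hg_nonneg, hg_le_one] with x h0 h1 using ⟨h0, h1⟩

theorem dist_integral_mul_le {a b u : X → ℝ} (ha : Integrable a σ) (hb : Integrable b σ)
    (hu : AEStronglyMeasurable u σ) (hu_bd : ∀ x, |u x| ≤ 1) :
    dist (∫ x, a x * u x ∂σ) (∫ x, b x * u x ∂σ) ≤ ∫ x, |a x - b x| ∂σ := by
  have hbd : ∀ᵐ x ∂σ, ‖u x‖ ≤ 1 := ae_of_all _ hu_bd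
  rw [dist_eq_norm, ← integral_sub (ha.mul_bdd hu hbd) (hb.mul_bdd hu hbd)]
  refine norm_integral_le_of_norm_le (ha.sub hb).abs (ae_of_all _ fun x => ?_)
  rw [← sub_mul, norm_mul, Real.norm_eq_abs, Real.norm_eq_abs]
  exact mul_le_of_le_one_right (abs_nonneg _) (hu_bd x)

theorem tendsto_integral_mul_of_tendsto_integral_abs_sub {ρ : X → ℝ} (ρ' : ℕ → X → ℝ)
    (hρ : Integrable ρ σ) (hρ' : ∀ M, Integrable (ρ' M) σ)
    (happrox : Tendsto (fun M => ∫ x, |ρ' M x - ρ x| ∂σ) atTop (𝓝 0))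
    {u : ℕ → X → ℝ} {v : X → ℝ} (hu_meas : ∀ k, AEStronglyMeasurable (u k) σ)
    (hu : ∀ k x, |u k x| ≤ 1) (hv_meas : AEStronglyMeasurable v σ) (hv : ∀ x, |v x| ≤ 1)
    (h : ∀ M, Tendsto (fun k => ∫ x, ρ' M x * u k x ∂σ) atTop (𝓝 (∫ x, ρ' M x * v x ∂σ))) :
    Tendsto (fun k => ∫ x, ρ x * u k x ∂σ) atTop (𝓝 (∫ x, ρ x * v x ∂σ)) := by
  refine TendstoUniformly.tendsto_of_eventually_tendsto (p := atTop)
    (F := fun M k => ∫ x, ρ' M x * u k x ∂σ) ?_ (Eventually.of_forall h) ?_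
  · rw [Metric.tendstoUniformly_iff]
    intro ε hε
    filter_upwards [happrox.eventually (gt_mem_nhds hε)] with M hM k
    rw [dist_comm]
    exact (dist_integral_mul_le (hρ' M) hρ (hu_meas k) (hu k)).trans_lt hM
  · rw [tendsto_iff_dist_tendsto_zero]
    exact squeeze_zero (fun _ => dist_nonneg)
      (fun M => dist_integral_mul_le (hρ' M) hρ hv_meas hv) happrox

theorem tendsto_integral_abs_min_sub {ρ : X → ℝ} (hρ : Integrable ρ σ) (hρ0 : ∀ x, 0 ≤ ρ x) :
    Tendsto (fun M : ℕ => ∫ x, |min (ρ x) M - ρ x| ∂σ) atTop (𝓝 0) := by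
  have hρ_meas := hρ.aestronglyMeasurable
  rw [← integral_zero X ℝ]
  refine tendsto_integral_of_dominated_convergence ρ (fun M => by fun_prop) hρ
    (fun M => ae_of_all _ fun x => ?_) (ae_of_all _ fun x => ?_)
  · have : 0 ≤ min (ρ x) M := le_min (hρ0 x) M.cast_nonneg
    rw [Real.norm_eq_abs, abs_abs, abs_sub_comm, abs_of_nonneg (sub_nonneg.2 (min_le_left _ _))]
    linarith
  · refine tendsto_const_nhds.congr' ?_
    filter_upwards [eventually_ge_atTop ⌈ρ x⌉₊] with M hM
    rw [min_eq_left ((Nat.le_ceil _).trans (Nat.cast_le.2 hM)), sub_self, abs_zero]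

theorem tendsto_integral_of_absolutelyContinuous {ν : Measure X} [SigmaFinite σ]
    [IsFiniteMeasure ν] (hνσ : ν ≪ σ) {u : ℕ → X → ℝ} {v : X → ℝ}
    (hu_meas : ∀ k, AEStronglyMeasurable (u k) σ) (hu : ∀ k x, |u k x| ≤ 1)
    (hv_meas : AEStronglyMeasurable v σ) (hv : ∀ x, |v x| ≤ 1)
    (h : ∀ ρ, MemLp ρ 1 σ → MemLp ρ ∞ σ →
      Tendsto (fun k => ∫ x, ρ x * u k x ∂σ) atTop (𝓝 (∫ x, ρ x * v x ∂σ))) :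
    Tendsto (fun k => ∫ x, u k x ∂ν) atTop (𝓝 (∫ x, v x ∂ν)) := by
  set ρ : X → ℝ := fun x => (ν.rnDeriv σ x).toReal
  have hρ : Integrable ρ σ := Measure.integrable_toReal_rnDeriv
  have hρ0 : ∀ x, 0 ≤ ρ x := fun x => ENNReal.toReal_nonneg
  have hρ' : ∀ M : ℕ, Integrable (fun x => min (ρ x) M) σ := fun M =>
    hρ.mono (by fun_prop) (ae_of_all _ fun x => by
      simp only [Real.norm_eq_abs, abs_of_nonneg (le_min (hρ0 x) M.cast_nonneg),
        abs_of_nonneg (hρ0 x)]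
      exact min_le_left _ _)
  simp_rw [← integral_rnDeriv_smul hνσ, smul_eq_mul]
  refine tendsto_integral_mul_of_tendsto_integral_abs_sub (fun M x => min (ρ x) M) hρ hρ'
    (tendsto_integral_abs_min_sub hρ hρ0) hu_meas hu hv_meas hv fun M =>
      h _ (memLp_one_iff_integrable.2 (hρ' M)) (memLp_top_of_bound (hρ' M).1 M ?_)
  exact ae_of_all _ fun x => by
    rw [Real.norm_eq_abs, abs_of_nonneg (le_min (hρ0 x) M.cast_nonneg)]
    exact min_le_right _ _

theorem exists_strictMono_tendsto_integral_of_absolutelyContinuous [IsFiniteMeasure σ]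
    [IsSeparable σ] (f : ℕ → X → ℝ) (hf_meas : ∀ n, Measurable (f n))
    (hf_bd : ∀ n x, 0 ≤ f n x ∧ f n x ≤ 1) :
    ∃ φ : ℕ → ℕ, StrictMono φ ∧ ∃ g : X → ℝ, Measurable g ∧ (∀ x, 0 ≤ g x ∧ g x ≤ 1) ∧
      ∀ ν : Measure X, IsFiniteMeasure ν → ν ≪ σ →
        Tendsto (fun k => ∫ x, f (φ k) x ∂ν) atTop (𝓝 (∫ x, g x ∂ν)) := by
  have hf_abs : ∀ n x, |f n x| ≤ 1 := fun n x => abs_le.2 ⟨by linarith [hf_bd n x], (hf_bd n x).2⟩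
  have hf_le_one : ∀ n, eLpNorm (f n) 2 σ ≤ eLpNorm (fun _ => (1 : ℝ)) 2 σ := fun n =>
    eLpNorm_mono fun x => by simpa using hf_abs n x
  have hf_L2 : ∀ n, MemLp (f n) 2 σ := fun n =>
    ⟨(hf_meas n).aestronglyMeasurable, (hf_le_one n).trans_lt (memLp_const 1).eLpNorm_lt_top⟩
  obtain ⟨φ, hφ, g₀, hconv⟩ := exists_strictMono_tendsto_integral_mul f hf_L2
    (memLp_const 1).eLpNorm_ne_top hf_le_one
  have hg₀ : ∀ᵐ x ∂σ, 0 ≤ g₀ x ∧ g₀ x ≤ 1 :=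
    ae_nonneg_and_le_one_of_tendsto_setIntegral (fun k => hf_bd (φ k))
      ((Lp.memLp g₀).integrable one_le_two) fun s hs => by
        simpa only [← Set.indicator_mul_right, Pi.one_apply, mul_one, integral_indicator hs] using
          hconv (s.indicator 1) ((memLp_const 1).indicator hs)
  set g : X → ℝ := fun x => max 0 (min (g₀ x) 1)
  have hg_ae : g =ᵐ[σ] g₀ := by
    filter_upwards [hg₀] with x hx
    simp [g, min_eq_left hx.2, max_eq_right hx.1]
  have hg_bd : ∀ x, 0 ≤ g x ∧ g x ≤ 1 := fun x =>
    ⟨le_max_left _ _, max_le zero_le_one (min_le_right _ _)⟩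
  have hg_meas : Measurable g := by
    have := (Lp.stronglyMeasurable g₀).measurable
    fun_prop
  refine ⟨φ, hφ, g, hg_meas, hg_bd, fun ν _ hνσ => ?_⟩
  refine tendsto_integral_of_absolutelyContinuous hνσ (fun k => (hf_meas _).aestronglyMeasurable)
    (fun k => hf_abs (φ k)) hg_meas.aestronglyMeasurable
    (fun x => abs_le.2 ⟨by linarith [hg_bd x], (hg_bd x).2⟩) fun ρ _ hρ => ?_
  have hρ_L2 : MemLp ρ 2 σ := hρ.mono_exponent le_top
  simp_rw [mul_comm (ρ _)]
  have hg_int : ∫ x, g x * ρ x ∂σ = ∫ x, g₀ x * ρ x ∂σ :=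
    integral_congr_ae (by filter_upwards [hg_ae] with x hx; rw [hx])
  rw [hg_int]
  exact hconv ρ hρ_L2

end Integrals

theorem absolutelyContinuous_of_mem_closure {X Y : Type*} [MeasurableSpace X]
    [TopologicalSpace Y] {H : Y → Measure X} {σ : Measure X} {V S : Set Y} {z : Y}
    (hcont : ∀ A, MeasurableSet A → ContinuousOn (fun y => (H y).real A) V)
    (hSV : S ⊆ V) (hS : ∀ y ∈ S, H y ≪ σ) (hzV : z ∈ V) (hzS : z ∈ closure S)
    [IsFiniteMeasure (H z)] : H z ≪ σ := by
  refine Measure.AbsolutelyContinuous.mk fun A hA hσA => ?_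
  have : (H z).real A ∈ closure {0} :=
    ((hcont A hA z hzV).mono hSV).mem_closure hzS fun y hy => by
      simp [Measure.real, hS y hy hσA]
  rwa [closure_singleton, Set.mem_singleton_iff, measureReal_eq_zero_iff] at this

theorem exists_isFiniteMeasure_absolutelyContinuous {X ι : Type*} [MeasurableSpace X]
    [Countable ι] (μ : ι → Measure X) [∀ i, SFinite (μ i)] :
    ∃ σ : Measure X, IsFiniteMeasure σ ∧ ∀ i, μ i ≪ σ :=
  ⟨(Measure.sum μ).toFinite, inferInstance, fun i =>
    (Measure.le_sum μ i).absolutelyContinuous.trans (absolutelyContinuous_toFinite _)⟩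

theorem pointwise_convergent_subsequence_of_strong_feller_general
    {X : Type*} [TopologicalSpace X]
    [SecondCountableTopology X] [MeasurableSpace X] [BorelSpace X]
    (V : Set X)
    (H : X → Measure X)
    (hH_sub : ∀ x ∈ V, H x Set.univ ≤ 1)
    (hH_cont : ∀ f : X → ℝ, Measurable f → (∃ C, ∀ x, |f x| ≤ C) →
      ContinuousOn (fun x => ∫ y, f y ∂(H x)) V)
    (f : ℕ → X → ℝ) (hf_meas : ∀ n, Measurable (f n))
    (hf_bd : ∀ n x, 0 ≤ f n x ∧ f n x ≤ 1) :
    ∃ (φ : ℕ → ℕ), StrictMono φ ∧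
      ∃ g : X → ℝ, Measurable g ∧ (∀ x, 0 ≤ g x ∧ g x ≤ 1) ∧
        ∀ x ∈ V, Tendsto (fun k => ∫ y, f (φ k) y ∂(H x)) atTop
          (𝓝 (∫ y, g y ∂(H x))) := by
  have hH_fin : ∀ x ∈ V, IsFiniteMeasure (H x) := fun x hx =>
    ⟨(hH_sub x hx).trans_lt one_lt_top⟩
  have hH_cont_real : ∀ A, MeasurableSet A → ContinuousOn (fun x => (H x).real A) V :=
    fun A hA => by
      simpa only [integral_indicator_one hA] using hH_cont _ (measurable_one.indicator hA)
        ⟨1, fun x => by by_cases hx : x ∈ A <;> simp [hx]⟩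
  obtain ⟨S, hS_count, hS_dense⟩ := TopologicalSpace.exists_countable_dense V
  have : Countable S := hS_count.to_subtype
  have : ∀ s : S, IsFiniteMeasure (H s) := fun s => hH_fin _ s.1.2
  obtain ⟨σ, _, hSσ⟩ := exists_isFiniteMeasure_absolutelyContinuous fun s : S => H s
  have hVσ : ∀ z ∈ V, H z ≪ σ := fun z hz =>
    have := hH_fin z hz
    absolutelyContinuous_of_mem_closure hH_cont_real (Subtype.coe_image_subset V S)
      (by rintro _ ⟨s, hs, rfl⟩; exact hSσ ⟨s, hs⟩) hz
      (closure_subtype.1 (hS_dense ⟨z, hz⟩))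
  obtain ⟨φ, hφ, g, hg_meas, hg_bd, hconv⟩ :=
    exists_strictMono_tendsto_integral_of_absolutelyContinuous (σ := σ) f hf_meas hf_bd
  exact ⟨φ, hφ, g, hg_meas, hg_bd, fun z hz => hconv (H z) (hH_fin z hz) (hVσ z hz)⟩

theorem pointwise_convergent_subsequence_of_strong_feller
    {X : Type*} [TopologicalSpace X] [LocallyCompactSpace X]
    [SecondCountableTopology X] [MeasurableSpace X] [BorelSpace X]
    (V : Set X) (hV : IsOpen V)
    (H : X → Measure X)
    (hH_sub : ∀ x ∈ V, H x Set.univ ≤ 1)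
    (hH_cont : ∀ f : X → ℝ, Measurable f → (∃ C, ∀ x, |f x| ≤ C) →
      ContinuousOn (fun x => ∫ y, f y ∂(H x)) V)
    (f : ℕ → X → ℝ) (hf_meas : ∀ n, Measurable (f n))
    (hf_bd : ∀ n x, 0 ≤ f n x ∧ f n x ≤ 1) :
    ∃ (φ : ℕ → ℕ), StrictMono φ ∧
      ∃ g : X → ℝ, Measurable g ∧ (∀ x, 0 ≤ g x ∧ g x ≤ 1) ∧
        ∀ x ∈ V, Tendsto (fun k => ∫ y, f (φ k) y ∂(H x)) atTop
          (𝓝 (∫ y, g y ∂(H x))) :=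
  pointwise_convergent_subsequence_of_strong_feller_general V H hH_sub hH_cont f hf_meas hf_bd
end

section
/- Let X be a set, K a compact positive linear operator on (B_b(X), ‖·‖_∞), and (U_n) an increasing sequence of Borel subsets of X with ⋃ U_n = X. Then ‖K 1_{X\U_n}‖_∞ → 0 as n → ∞. -/
open Filter Topology MeasureTheory

/-- The sup norm of a real-valued function. -/
noncomputable def supNorm {X : Type*} (h : X → ℝ) : ℝ := ⨆ x, |h x|

/-- An operator on the space of bounded Borel functions (with the sup norm) is compact if
the image of every sequence in the unit ball of bounded Borel functions has a uniformly
convergent subsequence. -/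
def IsCompactOpBb {X : Type*} [MeasurableSpace X] (K : (X → ℝ) → (X → ℝ)) : Prop :=
  ∀ f : ℕ → X → ℝ, (∀ n, Measurable (f n)) → (∀ n x, |f n x| ≤ 1) →
    ∃ φ : ℕ → ℕ, StrictMono φ ∧
      ∃ g : X → ℝ, TendstoUniformly (fun k => K (f (φ k))) g atTop

theorem vanishing_tail_of_compact
    {X : Type*} [MeasurableSpace X]
    (K : (X → ℝ) →ₗ[ℝ] (X → ℝ))
    (hpos : ∀ f : X → ℝ, (∀ x, 0 ≤ f x) → ∀ x, 0 ≤ K f x)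
    (hbd : ∀ f : X → ℝ, Measurable f → (∃ C, ∀ x, |f x| ≤ C) →
      ∃ C, ∀ x, |K f x| ≤ C)
    (hcomp : IsCompactOpBb (K : (X → ℝ) → (X → ℝ)))
    (U : ℕ → Set X) (hUmeas : ∀ n, MeasurableSet (U n))
    (hUmono : Monotone U) (hUnion : ⋃ n, U n = Set.univ) :
    Tendsto (fun n => supNorm (K (((U n)ᶜ).indicator 1))) atTop (𝓝 0) := by
  set f : ℕ → X → ℝ := fun n => ((U n)ᶜ).indicator 1 with hf
  set g : ℕ → X → ℝ := fun n => K (f n) with hg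
  -- basic facts about f
  have hfnonneg : ∀ n x, 0 ≤ f n x := fun n x =>
    Set.indicator_nonneg (fun _ _ => zero_le_one) x
  have hfmeas : ∀ n, Measurable (f n) := fun n =>
    measurable_one.indicator (hUmeas n).compl
  have hfbd : ∀ n x, |f n x| ≤ 1 := by
    intro n x
    rw [abs_of_nonneg (hfnonneg n x)]
    by_cases hx : x ∈ (U n)ᶜ
    · simp [hf, Set.indicator_of_mem hx]
    · simp [hf, Set.indicator_of_notMem hx]
  have hfanti : ∀ {n m : ℕ}, n ≤ m → ∀ x, f m x ≤ f n x := by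
    intro n m hnm x
    exact Set.indicator_le_indicator_of_subset
      (Set.compl_subset_compl.mpr (hUmono hnm)) (fun y => zero_le_one) x
  -- g is nonneg and pointwise antitone
  have hgnonneg : ∀ n x, 0 ≤ g n x := fun n x => hpos (f n) (hfnonneg n) x
  have hganti : ∀ {n m : ℕ}, n ≤ m → ∀ x, g m x ≤ g n x := by
    intro n m hnm x
    have h0 : ∀ y, 0 ≤ (f n - f m) y := fun y => sub_nonneg.mpr (hfanti hnm y)
    have := hpos (f n - f m) h0 x
    rw [map_sub] at this
    have : 0 ≤ K (f n) x - K (f m) x := this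
    linarith
  -- pointwise convergence of g to 0
  have hgpt : ∀ x, Tendsto (fun n => g n x) atTop (𝓝 0) := by
    intro x
    -- the function h = ∑ f n is well defined pointwise
    obtain ⟨m, hm⟩ : ∃ m, x ∈ U m := by
      have : x ∈ ⋃ n, U n := hUnion ▸ Set.mem_univ x
      exact Set.mem_iUnion.mp this
    have hsum : ∀ y : X, Summable (fun n => f n y) := by
      intro y
      obtain ⟨m', hm'⟩ : ∃ m', y ∈ U m' := by
        have : y ∈ ⋃ n, U n := hUnion ▸ Set.mem_univ y
        exact Set.mem_iUnion.mp this
      apply summable_of_ne_finset_zero (s := Finset.range m')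
      intro n hn
      have hn' : m' ≤ n := le_of_not_gt (fun h => hn (Finset.mem_range.mpr h))
      have hy : y ∈ U n := hUmono hn' hm'
      exact Set.indicator_of_notMem (Set.notMem_compl_iff.mpr hy) 1
    set h : X → ℝ := fun y => ∑' n, f n y with hh
    have hpart : ∀ N y, (∑ n ∈ Finset.range N, f n y) ≤ h y := by
      intro N y
      exact Summable.sum_le_tsum _ (fun n _ => hfnonneg n y) (hsum y)
    have hKbound : ∀ N, (∑ n ∈ Finset.range N, g n x) ≤ K h x := by
      intro N
      have h0 : ∀ y, 0 ≤ (h - ∑ n ∈ Finset.range N, f n) y := by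
        intro y
        have : (∑ n ∈ Finset.range N, f n) y = ∑ n ∈ Finset.range N, f n y := by
          simp
        simp only [Pi.sub_apply, this, sub_nonneg]
        exact hpart N y
      have := hpos _ h0 x
      rw [map_sub, map_sum] at this
      have h2 : K h x - (∑ n ∈ Finset.range N, K (f n)) x ≥ 0 := this
      have h3 : (∑ n ∈ Finset.range N, K (f n)) x = ∑ n ∈ Finset.range N, g n x := by
        simp [hg]
      linarith [h3 ▸ h2]
    -- the pointwise limit is the infimum
    have hbdd : BddBelow (Set.range fun n => g n x) := by
      refine ⟨0, ?_⟩
      rintro _ ⟨n, rfl⟩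
      exact hgnonneg n x
    have hanti' : Antitone (fun n => g n x) := fun n m hnm => hganti hnm x
    have htend := tendsto_atTop_ciInf hanti' hbdd
    set L := ⨅ n, g n x with hL
    have hL0 : L = 0 := by
      have hLnonneg : 0 ≤ L := le_ciInf (fun n => hgnonneg n x)
      by_contra hne
      have hLpos : 0 < L := lt_of_le_of_ne hLnonneg (Ne.symm hne)
      have hNL : ∀ N : ℕ, (N : ℝ) * L ≤ K h x := by
        intro N
        calc (N : ℝ) * L = ∑ _n ∈ Finset.range N, L := by
              simp [mul_comm]
          _ ≤ ∑ n ∈ Finset.range N, g n x :=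
              Finset.sum_le_sum (fun n _ => ciInf_le hbdd n)
          _ ≤ K h x := hKbound N
      obtain ⟨N, hN⟩ := exists_nat_gt (K h x / L)
      have : K h x < (N : ℝ) * L := by
        rw [div_lt_iff₀ hLpos] at hN
        linarith
      linarith [hNL N]
    rw [hL0] at htend
    exact htend
  -- boundedness of |g n|
  have hgbdd : ∀ n, BddAbove (Set.range fun x => |g n x|) := by
    intro n
    obtain ⟨C, hC⟩ := hbd (f n) (hfmeas n) ⟨1, hfbd n⟩
    refine ⟨C, ?_⟩
    rintro _ ⟨x, rfl⟩
    exact hC x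
  -- supNorm of g is antitone
  have hsnonneg : ∀ n, 0 ≤ supNorm (g n) :=
    fun n => Real.iSup_nonneg (fun x => abs_nonneg _)
  have hsanti : Antitone (fun n => supNorm (g n)) := by
    intro n m hnm
    apply Real.iSup_le _ (hsnonneg n)
    intro x
    have h1 : |g m x| ≤ |g n x| := by
      rw [abs_of_nonneg (hgnonneg m x), abs_of_nonneg (hgnonneg n x)]
      exact hganti hnm x
    exact h1.trans (le_ciSup (hgbdd n) x)
  -- compactness: extract a uniformly convergent subsequence
  obtain ⟨φ, hφ, G, hG⟩ := hcomp f hfmeas hfbd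
  -- G = 0
  have hG0 : G = 0 := by
    funext x
    have h1 : Tendsto (fun k => g (φ k) x) atTop (𝓝 (G x)) := hG.tendsto_at x
    have h2 : Tendsto (fun k => g (φ k) x) atTop (𝓝 0) :=
      (hgpt x).comp hφ.tendsto_atTop
    exact tendsto_nhds_unique h1 h2
  rw [hG0] at hG
  -- supNorm along the subsequence tends to 0
  have hsub : Tendsto (fun k => supNorm (g (φ k))) atTop (𝓝 0) := by
    rw [Metric.tendsto_atTop]
    intro ε hε
    rw [Metric.tendstoUniformly_iff] at hG
    obtain ⟨N, hN⟩ := eventually_atTop.mp (hG (ε / 2) (by linarith))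
    refine ⟨N, fun k hk => ?_⟩
    have hb : supNorm (g (φ k)) ≤ ε / 2 := by
      apply Real.iSup_le _ (by linarith)
      intro x
      have := hN k hk x
      rw [Real.dist_eq] at this
      simp only [Pi.zero_apply, zero_sub, abs_neg] at this
      exact le_of_lt this
    rw [Real.dist_eq, sub_zero, abs_of_nonneg (hsnonneg (φ k))]
    linarith
  -- conclude via antitonicity
  have hbddb : BddBelow (Set.range fun n => supNorm (g n)) := by
    refine ⟨0, ?_⟩
    rintro _ ⟨n, rfl⟩
    exact hsnonneg n
  have htend := tendsto_atTop_ciInf hsanti hbddb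
  have hsub' : Tendsto (fun k => supNorm (g (φ k))) atTop
      (𝓝 (⨅ n, supNorm (g n))) := htend.comp hφ.tendsto_atTop
  have : (⨅ n, supNorm (g n)) = 0 := tendsto_nhds_unique hsub' hsub
  rw [this] at htend
  exact htend
end
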